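/- arXiv:1704.00111 — 2 statements merged into one kernel-verified Lean document; each statement's English description precedes it below -/
import Mathlib

section
/- For λ ∈ W*, let B_λ : V → V be the linear map with B_λ(u) = λ(u)e for u ∈ W, B_λ(η) = 0 for η ∈ W*, and B_λ(e) = −λ. Then for all λ ∈ W*, x ∈ V and a ∈ Δ: π(B_λ(x) ⊗ a) + (1/√2) π(x ⊗ D(D_λ(a))) = (1/√2) D(D_λ(π(x ⊗ a))). (This is the equivariance of π with respect to the summand W* ⊗ e of 𝔰𝔬(2m+1).) -/
noncomputable section

open TensorProduct

/-- `W = ℂ^m`. -/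
abbrev SpinW (m : ℕ) : Type := Fin m → ℂ

/-- `Δ = ⋀ W`, the exterior algebra of `W`. -/
abbrev SpinDelta (m : ℕ) : Type := ExteriorAlgebra ℂ (SpinW m)

/-- `V = W ⊕ W* ⊕ ℂe`. -/
abbrev SpinV (m : ℕ) : Type := SpinW m × Module.Dual ℂ (SpinW m) × ℂ

/-- The standard basis vector `w_i` of `W`. -/
def wB (m : ℕ) (i : Fin m) : SpinW m := Pi.single i 1

/-- The dual basis vector `w_i*` of `W*`. -/
def wD (m : ℕ) (i : Fin m) : Module.Dual ℂ (SpinW m) := LinearMap.proj i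

/-- `w_i` regarded as an element of `V`. -/
def wV (m : ℕ) (i : Fin m) : SpinV m := (wB m i, 0, 0)

/-- `w_i*` regarded as an element of `V`. -/
def wsV (m : ℕ) (i : Fin m) : SpinV m := (0, wD m i, 0)

/-- `e` regarded as an element of `V`. -/
def eV (m : ℕ) : SpinV m := (0, 0, 1)

/-- `X_v : Δ → Δ`, left exterior multiplication by `v ∈ W`. -/
def Xop (m : ℕ) (v : SpinW m) : SpinDelta m →ₗ[ℂ] SpinDelta m :=
  LinearMap.mulLeft ℂ (ExteriorAlgebra.ι ℂ v)

/-- `D_λ : Δ → Δ`, the interior product with `λ ∈ W*`;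
it satisfies `D_λ(v₁ ∧ ⋯ ∧ v_k) = Σ (−1)^{i−1} λ(v_i) v₁ ∧ ⋯ ∧ v̂_i ∧ ⋯ ∧ v_k`. -/
def Dop (m : ℕ) (lam : Module.Dual ℂ (SpinW m)) : SpinDelta m →ₗ[ℂ] SpinDelta m :=
  CliffordAlgebra.contractLeft (Q := (0 : QuadraticForm ℂ (SpinW m))) lam

/-- The grading operator `D : Δ → Δ` acting by `(−1)^k` on `⋀^k W`. -/
def Gop (m : ℕ) : SpinDelta m →ₗ[ℂ] SpinDelta m :=
  (CliffordAlgebra.involute (Q := (0 : QuadraticForm ℂ (SpinW m)))).toLinearMap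

/-- Projection `V → W`. -/
def pW (m : ℕ) : SpinV m →ₗ[ℂ] SpinW m := LinearMap.fst ℂ _ _

/-- Projection `V → W*`. -/
def pD (m : ℕ) : SpinV m →ₗ[ℂ] Module.Dual ℂ (SpinW m) :=
  (LinearMap.fst ℂ _ ℂ).comp (LinearMap.snd ℂ (SpinW m) _)

/-- Projection `V → ℂ` (the `e`-coordinate). -/
def pC (m : ℕ) : SpinV m →ₗ[ℂ] ℂ :=
  (LinearMap.snd ℂ _ ℂ).comp (LinearMap.snd ℂ (SpinW m) _)

/-- Inclusion `W → V`. -/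
def iW (m : ℕ) : SpinW m →ₗ[ℂ] SpinV m :=
  LinearMap.inl ℂ (SpinW m) (Module.Dual ℂ (SpinW m) × ℂ)

/-- Inclusion `W* → V`. -/
def iD (m : ℕ) : Module.Dual ℂ (SpinW m) →ₗ[ℂ] SpinV m :=
  (LinearMap.inr ℂ (SpinW m) _).comp (LinearMap.inl ℂ (Module.Dual ℂ (SpinW m)) ℂ)

/-- Inclusion `ℂe → V`. -/
def iC (m : ℕ) : ℂ →ₗ[ℂ] SpinV m :=
  (LinearMap.inr ℂ (SpinW m) _).comp (LinearMap.inr ℂ (Module.Dual ℂ (SpinW m)) ℂ)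

/-- The symmetric bilinear form `ω` on `V`:
`ω((u,η,c),(u',η',c')) = η'(u) + η(u') + c·c'`; so `ω(w_i, w_j*) = δ_{ij}`,
`ω(e,e) = 1`, `W` and `W*` are isotropic and `e` is orthogonal to both. -/
def omegaB (m : ℕ) : SpinV m →ₗ[ℂ] SpinV m →ₗ[ℂ] ℂ :=
  ((((LinearMap.llcomp ℂ (SpinV m) (SpinW m) ℂ).flip (pW m)).comp (pD m)).flip
  + ((LinearMap.llcomp ℂ (SpinV m) (SpinW m) ℂ).flip (pW m)).comp (pD m))
  + (pC m).smulRight (pC m)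

/-- The spin projection `π : V ⊗ Δ → Δ` as a bilinear map:
`(v,λ,c) ⊗ a ↦ √2 X_v(a) + √2 D_λ(a) + c D(a)`. -/
def piB (m : ℕ) : SpinV m →ₗ[ℂ] SpinDelta m →ₗ[ℂ] SpinDelta m :=
  (Real.sqrt 2 : ℂ) • (((LinearMap.mul ℂ (SpinDelta m)).comp ((ExteriorAlgebra.ι ℂ).comp (pW m)))
      + (CliffordAlgebra.contractLeft (Q := (0 : QuadraticForm ℂ (SpinW m)))).comp (pD m))
  + (pC m).smulRight (Gop m)

/-- The spin projection `π : V ⊗ Δ → Δ`. -/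
def piMap (m : ℕ) : SpinV m ⊗[ℂ] SpinDelta m →ₗ[ℂ] SpinDelta m :=
  TensorProduct.lift (piB m)

/-- The spin injection `ι : Δ → V ⊗ Δ`,
`a ↦ √2 Σᵢ (wᵢ ⊗ D_{wᵢ*}(a) + wᵢ* ⊗ X_{wᵢ}(a)) + e ⊗ D(a)`. -/
def iotaMap (m : ℕ) : SpinDelta m →ₗ[ℂ] SpinV m ⊗[ℂ] SpinDelta m :=
  (Real.sqrt 2 : ℂ) • (∑ i : Fin m,
      ((TensorProduct.mk ℂ (SpinV m) (SpinDelta m) (wV m i)).comp (Dop m (wD m i))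
        + (TensorProduct.mk ℂ (SpinV m) (SpinDelta m) (wsV m i)).comp (Xop m (wB m i))))
  + (TensorProduct.mk ℂ (SpinV m) (SpinDelta m) (eV m)).comp (Gop m)

/-- The invariant element `θ = Σᵢ (wᵢ ⊗ wᵢ* + wᵢ* ⊗ wᵢ) + e ⊗ e ∈ V ⊗ V`. -/
def theta (m : ℕ) : SpinV m ⊗[ℂ] SpinV m :=
  (∑ i : Fin m, (wV m i ⊗ₜ wsV m i + wsV m i ⊗ₜ wV m i)) + eV m ⊗ₜ eV m

/-- Evaluation of a dual vector at `w ∈ W`. -/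
def evalW (m : ℕ) (w : SpinW m) : Module.Dual ℂ (SpinW m) →ₗ[ℂ] ℂ :=
  Module.Dual.eval ℂ (SpinW m) w

/-- `A_{v,w} : V → V`, with `A(u) = 0`, `A(η) = η(w)v − η(v)w`, `A(e) = 0`. -/
def Amap (m : ℕ) (v w : SpinW m) : SpinV m →ₗ[ℂ] SpinV m :=
  (iW m) ∘ₗ (((evalW m w).smulRight v - (evalW m v).smulRight w) ∘ₗ pD m)

/-- `B_λ : V → V`, with `B(u) = λ(u)e`, `B(η) = 0`, `B(e) = −λ`. -/
def Bmap (m : ℕ) (lam : Module.Dual ℂ (SpinW m)) : SpinV m →ₗ[ℂ] SpinV m :=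
  (iC m) ∘ₗ (lam ∘ₗ pW m) - (iD m) ∘ₗ ((pC m).smulRight lam)

/-- `C_v : V → V`, with `C(u) = 0`, `C(η) = −η(v)e`, `C(e) = v`. -/
def Cmap (m : ℕ) (v : SpinW m) : SpinV m →ₗ[ℂ] SpinV m :=
  (iW m) ∘ₗ ((pC m).smulRight v) - (iC m) ∘ₗ ((evalW m v) ∘ₗ pD m)

/-- `H_{v,λ} : V → V`, with `H(u) = λ(u)v`, `H(η) = −η(v)λ`, `H(e) = 0`. -/
def Hmap (m : ℕ) (v : SpinW m) (lam : Module.Dual ℂ (SpinW m)) : SpinV m →ₗ[ℂ] SpinV m :=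
  (iW m) ∘ₗ ((lam ∘ₗ pW m).smulRight v) - (iD m) ∘ₗ (((evalW m v) ∘ₗ pD m).smulRight lam)

/-- `E_{λ,μ} : V → V`, with `E(u) = μ(u)λ − λ(u)μ`, `E(η) = 0`, `E(e) = 0`. -/
def Emap (m : ℕ) (lam mu : Module.Dual ℂ (SpinW m)) : SpinV m →ₗ[ℂ] SpinV m :=
  (iD m) ∘ₗ ((mu ∘ₗ pW m).smulRight lam - (lam ∘ₗ pW m).smulRight mu)

/-- The contraction `ω ⊗ id_Δ : V ⊗ (V ⊗ Δ) → Δ`, `x ⊗ y ⊗ b ↦ ω(x,y) b`. -/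
def contrMap (m : ℕ) : SpinV m ⊗[ℂ] (SpinV m ⊗[ℂ] SpinDelta m) →ₗ[ℂ] SpinDelta m :=
  (TensorProduct.lid ℂ (SpinDelta m)).toLinearMap
    ∘ₗ (TensorProduct.map (TensorProduct.lift (omegaB m)) LinearMap.id)
    ∘ₗ (TensorProduct.assoc ℂ (SpinV m) (SpinV m) (SpinDelta m)).symm.toLinearMap

/-- The swap `τ ⊗ id_Δ : V ⊗ (V ⊗ Δ) → V ⊗ (V ⊗ Δ)`, `x ⊗ y ⊗ b ↦ y ⊗ x ⊗ b`. -/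
def swapMap (m : ℕ) :
    SpinV m ⊗[ℂ] (SpinV m ⊗[ℂ] SpinDelta m) →ₗ[ℂ] SpinV m ⊗[ℂ] (SpinV m ⊗[ℂ] SpinDelta m) :=
  (TensorProduct.assoc ℂ (SpinV m) (SpinV m) (SpinDelta m)).toLinearMap
    ∘ₗ (LinearMap.rTensor (SpinDelta m) (TensorProduct.comm ℂ (SpinV m) (SpinV m)).toLinearMap)
    ∘ₗ (TensorProduct.assoc ℂ (SpinV m) (SpinV m) (SpinDelta m)).symm.toLinearMap
lemma involute_contractLeft' {R M : Type*} [CommRing R] [AddCommGroup M] [Module R M]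
    {Q : QuadraticForm R M} (d : Module.Dual R M) (x : CliffordAlgebra Q) :
    CliffordAlgebra.involute (CliffordAlgebra.contractLeft d x)
      = - CliffordAlgebra.contractLeft d (CliffordAlgebra.involute x) := by
  induction' x using CliffordAlgebra.left_induction with r x y hx hy x m hx
  · simp [CliffordAlgebra.contractLeft_algebraMap]
  · simp only [map_add, hx, hy]; abel
  · rw [CliffordAlgebra.contractLeft_ι_mul]
    simp only [map_sub, map_smul, map_mul, map_neg, CliffordAlgebra.involute_ι, hx,
      CliffordAlgebra.contractLeft_ι_mul, neg_mul, mul_neg, neg_sub, neg_neg, neg_mul_neg,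
      smul_neg, sub_neg_eq_add]

lemma piMap_tmul (m : ℕ) (y : SpinV m) (a : SpinDelta m) :
    piMap m (y ⊗ₜ a) = (Real.sqrt 2 : ℂ) • (ExteriorAlgebra.ι ℂ y.1 * a
        + CliffordAlgebra.contractLeft (Q := (0 : QuadraticForm ℂ (SpinW m))) y.2.1 a)
      + y.2.2 • CliffordAlgebra.involute a := by
  simp [piMap, piB, pW, pD, pC, Gop, LinearMap.smul_apply, smul_add]


/-- Equivariance of `π` with respect to the summand `W* ⊗ e` of `𝔰𝔬(2m+1)`:
`π(B_λ(x) ⊗ a) + (1/√2) π(x ⊗ D(D_λ(a))) = (1/√2) D(D_λ(π(x ⊗ a)))`. -/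
theorem spin_projection_equivariant_dual_e (m : ℕ) (hm : 1 ≤ m)
    (lam : Module.Dual ℂ (SpinW m)) (x : SpinV m) (a : SpinDelta m) :
    piMap m ((Bmap m lam x) ⊗ₜ a)
        + ((Real.sqrt 2 : ℂ))⁻¹ • piMap m (x ⊗ₜ (Gop m (Dop m lam a)))
      = ((Real.sqrt 2 : ℂ))⁻¹ • Gop m (Dop m lam (piMap m (x ⊗ₜ a))) := by
  obtain ⟨u, eta, c⟩ := x
  have hB : Bmap m lam (u, eta, c) = ((0 : SpinW m), -(c • lam), lam u) := by
    simp [Bmap, iC, iD, pW, pC, Prod.ext_iff]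
  have hs : (Real.sqrt 2 : ℂ) ≠ 0 := by
    norm_num [Complex.ext_iff, Real.sqrt_eq_zero']
  have hs2 : (Real.sqrt 2 : ℂ) * (Real.sqrt 2 : ℂ) = 2 := by
    rw [← Complex.ofReal_mul, Real.mul_self_sqrt (by norm_num)]
    norm_num
  rw [hB]
  simp only [piMap_tmul, Gop, Dop, AlgHom.toLinearMap_apply]
  rw [involute_contractLeft']
  simp only [map_add, map_smul, map_mul, CliffordAlgebra.involute_ι,
    CliffordAlgebra.involute_involute, CliffordAlgebra.contractLeft_ι_mul,
    CliffordAlgebra.contractLeft_comm (d := lam) (d' := eta),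
    involute_contractLeft', map_sub, map_neg, LinearMap.map_neg, LinearMap.map_smul_of_tower,
    map_zero, ExteriorAlgebra.ι, CliffordAlgebra.involute_ι]
  simp only [smul_add, smul_neg, smul_smul, neg_mul, mul_neg, neg_neg, smul_sub,
    LinearMap.neg_apply, LinearMap.smul_apply,
    inv_mul_cancel₀ hs, one_smul, zero_mul, zero_add, add_zero, neg_smul]
  match_scalars <;> field_simp
  linear_combination (-c) * hs2
end
end

section
/- Contracting a spin injection against a vector recovers the spin projection: (ω ⊗ id_Δ)((id_V ⊗ ι)(x ⊗ a)) = π(x ⊗ a) for all x ∈ V and a ∈ Δ, where ω ⊗ id_Δ : V ⊗ V ⊗ Δ → Δ denotes the contraction u ⊗ y ⊗ b ↦ ω(u, y) b. -/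
noncomputable section

open TensorProduct

lemma contrMap_tmul (m : ℕ) (x y : SpinV m) (b : SpinDelta m) :
    contrMap m (x ⊗ₜ (y ⊗ₜ b)) = omegaB m x y • b := by
  simp [contrMap]

lemma omegaB_apply (m : ℕ) (x y : SpinV m) :
    omegaB m x y = y.2.1 x.1 + x.2.1 y.1 + x.2.2 * y.2.2 := by
  simp [omegaB, pW, pD, pC, LinearMap.smulRight_apply]

lemma sum_vec (m : ℕ) (u : SpinW m) :
    ∑ i : Fin m, u i • wB m i = u := by
  rw [← Finset.univ_sum_single u]
  refine Finset.sum_congr rfl fun i _ => ?_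
  ext j
  by_cases h : j = i <;> simp [wB, Pi.single_apply, h]

lemma sum_dual (m : ℕ) (eta : Module.Dual ℂ (SpinW m)) :
    ∑ i : Fin m, eta (wB m i) • wD m i = eta := by
  apply LinearMap.ext; intro v
  conv_rhs => rw [← sum_vec m v]
  simp [wD, map_sum, mul_comm]

/-- Contracting a spin injection against a vector recovers the spin projection:
`(ω ⊗ id_Δ)((id_V ⊗ ι)(x ⊗ a)) = π(x ⊗ a)` for all `x ∈ V` and `a ∈ Δ`. -/
theorem spin_contraction_injection_eq_projection (m : ℕ) (hm : 1 ≤ m)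
    (x : SpinV m) (a : SpinDelta m) :
    contrMap m (LinearMap.lTensor (SpinV m) (iotaMap m) (x ⊗ₜ a)) = piMap m (x ⊗ₜ a) := by
  obtain ⟨u, eta, c⟩ := x
  simp only [LinearMap.lTensor_tmul, iotaMap, LinearMap.add_apply, LinearMap.smul_apply,
    LinearMap.coe_sum, Finset.sum_apply, LinearMap.comp_apply, TensorProduct.mk_apply,
    map_add, map_smul, map_sum, TensorProduct.tmul_add, TensorProduct.tmul_smul, TensorProduct.tmul_sum, contrMap_tmul, omegaB_apply, piMap, TensorProduct.lift.tmul,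
    piB, LinearMap.smulRight_apply]
  simp only [wV, wsV, eV, pW, pD, pC, LinearMap.fst_apply, LinearMap.snd_apply,
    LinearMap.comp_apply, LinearMap.zero_apply, mul_one, mul_zero, zero_mul, add_zero, zero_add,
    map_zero]
  have h1 : ∑ i : Fin m, (eta (wB m i) • Dop m (wD m i) a + (wD m i) u • Xop m (wB m i) a)
      = (LinearMap.mul ℂ (SpinDelta m)) (ExteriorAlgebra.ι ℂ u) a
        + (CliffordAlgebra.contractLeft (Q := (0 : QuadraticForm ℂ (SpinW m)))) eta a := by
    rw [Finset.sum_add_distrib, add_comm]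
    congr 1
    · have := sum_vec m u
      calc ∑ i : Fin m, (wD m i) u • Xop m (wB m i) a
          = ExteriorAlgebra.ι ℂ (∑ i : Fin m, u i • wB m i) * a := by
            simp [Xop, wD, Finset.sum_mul, map_sum]
        _ = _ := by rw [this]; simp
    · have := sum_dual m eta
      calc ∑ i : Fin m, eta (wB m i) • Dop m (wD m i) a
          = (CliffordAlgebra.contractLeft (Q := (0 : QuadraticForm ℂ (SpinW m))))
            (∑ i : Fin m, eta (wB m i) • wD m i) a := by
            simp [Dop, map_sum, map_smul]
        _ = _ := by rw [this]
  rw [h1]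
end
end
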